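/- For each subdiagonal word d of length n, El(d) = Eul(r(d)), where r reverses the word. -/

import Mathlib

/-- Descent set (ligne of route) of a word, with 1-based positions. -/
def ligne (w : List ℕ) : Finset ℕ :=
  (Finset.Icc 1 (w.length - 1)).filter (fun i => w.getD (i-1) 0 > w.getD i 0)

/-- Major index of a word. -/
def maj (w : List ℕ) : ℕ := ∑ i ∈ ligne w, i

/-- Inversion number of a word. -/
def inv (w : List ℕ) : ℕ :=
  ((Finset.range w.length ×ˢ Finset.range w.length).filter
    (fun p => p.1 < p.2 ∧ w.getD p.1 0 > w.getD p.2 0)).card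

/-- `w` is (the one-line word of) a permutation of `1,…,n`. -/
def IsPermWord (n : ℕ) (w : List ℕ) : Prop := w.Perm (List.range' 1 n)

/-- One-line word of `σ ∈ S_n` with values in `1,…,n`. -/
def toWord {n : ℕ} (σ : Equiv.Perm (Fin n)) : List ℕ := List.ofFn (fun i => (σ i : ℕ) + 1)

/-- Subexcedent word: `0 ≤ d_i ≤ i-1` (1-based), i.e. `d_i ≤ i` for 0-based `i`. -/
def Subexcedent (w : List ℕ) : Prop := ∀ i < w.length, w.getD i 0 ≤ i

/-- Subdiagonal word: `0 ≤ d_i ≤ n-i` (1-based). -/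
def Subdiagonal (w : List ℕ) : Prop := ∀ i < w.length, w.getD i 0 + i + 1 ≤ w.length

/-- Lehmer code: `d_i = #{j < i : x_j > x_i}`. -/
def invcode (w : List ℕ) : List ℕ :=
  (List.range w.length).map (fun i => ((Finset.range i).filter (fun j => w.getD j 0 > w.getD i 0)).card)

/-- `Lc`-code: `d_i = #{j > i : x_i > x_j}`. -/
def lc (w : List ℕ) : List ℕ :=
  (List.range w.length).map (fun i => ((Finset.Ico (i+1) w.length).filter (fun j => w.getD i 0 > w.getD j 0)).card)

/-- Major index code: `d_i = maj(σ|_i) - maj(σ|_{i-1})`, where `σ|_i` erases letters `> i`. -/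
def majcode (w : List ℕ) : List ℕ :=
  (List.range w.length).map (fun i => maj (w.filter (· ≤ i+1)) - maj (w.filter (· ≤ i)))

/-- `Mc`-code: `d_i = maj(σ^{(i)}) - maj(σ^{(i+1)})`, where `σ^{(i)}` erases letters `< i`. -/
def mc (w : List ℕ) : List ℕ :=
  (List.range w.length).map (fun i => maj (w.filter (fun x => i+1 ≤ x)) - maj (w.filter (fun x => i+2 ≤ x)))

/-- One-line word of the inverse permutation. -/
def invWord (w : List ℕ) : List ℕ :=
  (List.range w.length).map (fun i => w.idxOf (i+1) + 1)

/-- `Ic σ = Lc (σ⁻¹)`. -/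
def ic (w : List ℕ) : List ℕ := lc (invWord w)

/-- Inverse ligne of route. -/
def iligne (w : List ℕ) : Finset ℕ := ligne (invWord w)

/-- Complement map `δ` on codes: `δ(d₁⋯d_n) = (0-d₁)(1-d₂)⋯(n-1-d_n)`. -/
def deltaC (w : List ℕ) : List ℕ :=
  (List.range w.length).map (fun i => i - w.getD i 0)

/-- Nondecreasing rearrangement of a word. -/
def sortW (w : List ℕ) : List ℕ := List.insertionSort (· ≤ ·) w

/-- Set-valued statistic `El = Ligne ∘ Mc⁻¹` on subdiagonal words. -/
noncomputable def El (d : List ℕ) : Finset ℕ := by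
  classical
  exact if h : ∃ w, IsPermWord d.length w ∧ mc w = d then ligne h.choose else ∅

/-- Set-valued statistic `Eul = Ligne ∘ Majcode⁻¹` on subexcedent words. -/
noncomputable def Eul (d : List ℕ) : Finset ℕ := by
  classical
  exact if h : ∃ w, IsPermWord d.length w ∧ majcode w = d then ligne h.choose else ∅

/-!
Deleting the letter `1` from a permutation word (and lowering the other letters by one) removes
the first letter of its `Mc`-code; deleting the largest letter removes the last letter of its
`Majcode`. In both cases the descent set of the longer word is obtained from that of the shorter
one by a local rule depending only on the insertion position, and the increase of `maj` is an
explicit function of that position which is injective, hence a bijection onto `0, …, m`.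
The key point is that every descent set obtained by inserting a new minimum can also be obtained
by inserting a new maximum at a suitable position; the two increases of `maj` then agree.
Induction on the length therefore turns any `w` into a `u` with `Majcode u = reverse (Mc w)` and
the same descent set, and injectivity of the increments shows that `Majcode u` determines the
descent set of `u`.
-/

open Finset

namespace DescentSet

variable {S : Finset ℕ} {i j j' k m p : ℕ}

/- Let `S` be the descent set of a word of length `m`. Inserting a new letter at index `j`
(0-based) destroys the descent at `j` and moves the descents above `j` up by one, giving
`split S j`; a new minimum then creates a descent at `j` (if `j ≠ 0`), a new maximum one at
`j + 1` (if `j ≠ m`). `insertMinIncr` and `insertMaxIncr` are the resulting increases of `maj`. -/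

def split (S : Finset ℕ) (j : ℕ) : Finset ℕ :=
  {x ∈ S | x < j} ∪ {x ∈ S | j < x}.image (· + 1)

def insertMin (S : Finset ℕ) (j : ℕ) : Finset ℕ :=
  if j = 0 then split S j else insert j (split S j)

def insertMax (S : Finset ℕ) (j m : ℕ) : Finset ℕ :=
  if j < m then insert (j + 1) (split S j) else split S j

def insertMinIncr (S : Finset ℕ) (j : ℕ) : ℕ :=
  (if j ∈ S then 0 else j) + #{x ∈ S | j < x}

def insertMaxIncr (S : Finset ℕ) (j m : ℕ) : ℕ :=
  if j < m then insertMinIncr S j + 1 else 0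

lemma mem_split : i ∈ split S j ↔ i < j ∧ i ∈ S ∨ j + 1 < i ∧ i - 1 ∈ S := by
  simp only [split, mem_union, mem_filter, mem_image]
  constructor
  · rintro (⟨h, h'⟩ | ⟨x, ⟨hx, hjx⟩, rfl⟩)
    · exact Or.inl ⟨h', h⟩
    · exact Or.inr ⟨by omega, by simpa using hx⟩
  · rintro (⟨h, h'⟩ | ⟨h, h'⟩)
    · exact Or.inl ⟨h', h⟩
    · exact Or.inr ⟨i - 1, ⟨h', by omega⟩, by omega⟩

lemma self_notMem_split : j ∉ split S j := by
  simp [mem_split]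

lemma mem_insertMin :
    i ∈ insertMin S j ↔ i < j ∧ i ∈ S ∨ 0 < i ∧ i = j ∨ j + 1 < i ∧ i - 1 ∈ S := by
  unfold insertMin
  split_ifs <;> simp only [mem_insert, mem_split] <;> grind

lemma mem_insertMax :
    i ∈ insertMax S j m ↔ i < j ∧ i ∈ S ∨ j < m ∧ i = j + 1 ∨ j + 1 < i ∧ i - 1 ∈ S := by
  unfold insertMax
  split_ifs <;> simp only [mem_insert, mem_split] <;> grind

lemma sum_split_add :
    ∑ x ∈ split S j, x + (if j ∈ S then j else 0) = ∑ x ∈ S, x + #{x ∈ S | j < x} := by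
  have hdisj : Disjoint {x ∈ S | x < j} ({x ∈ S | j < x}.image (· + 1)) := by
    simp only [disjoint_left, mem_filter, mem_image]
    omega
  have hj : ∑ x ∈ S with ¬x < j ∧ ¬j < x, x = if j ∈ S then j else 0 := by
    rw [filter_congr (q := (· = j)) (by omega), filter_eq']
    split_ifs <;> simp
  rw [split, sum_union hdisj, sum_image (by simp), sum_add_distrib, sum_const, smul_eq_mul,
    mul_one, ← sum_filter_add_sum_filter_not S (· < j),
    ← sum_filter_add_sum_filter_not {x ∈ S | ¬x < j} (j < ·), filter_filter, filter_filter,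
    filter_congr (p := fun x => ¬x < j ∧ j < x) (q := (j < ·)) (by omega), hj]
  ring

lemma sum_insertMin : ∑ x ∈ insertMin S j, x = ∑ x ∈ S, x + insertMinIncr S j := by
  have := sum_split_add (S := S) (j := j)
  unfold insertMin insertMinIncr
  split_ifs at this ⊢ <;> try rw [sum_insert self_notMem_split]
  all_goals omega

lemma sum_insertMax (hS : S ⊆ range m) :
    ∑ x ∈ insertMax S j m, x = ∑ x ∈ S, x + insertMaxIncr S j m := by
  have := sum_split_add (S := S) (j := j)
  unfold insertMax insertMaxIncr insertMinIncr
  by_cases hjm : j < m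
  · have : j + 1 ∉ split S j := by simp [mem_split]
    rw [if_pos hjm, if_pos hjm, sum_insert this]
    split_ifs at * <;> omega
  · have hjS : j ∉ S := fun h => hjm (mem_range.1 (hS h))
    have hcnt : #{x ∈ S | j < x} = 0 :=
      card_eq_zero.2 (filter_eq_empty_iff.2 fun x hx => by have := mem_range.1 (hS hx); omega)
    rw [if_neg hjm, if_neg hjm]
    simp only [if_neg hjS, hcnt] at this
    omega

lemma card_filter_lt_add_one_le (hj' : j' ∈ S) (h : j < j') :
    #{x ∈ S | j' < x} + 1 ≤ #{x ∈ S | j < x} := by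
  refine card_lt_card ((ssubset_iff_of_subset ?_).2 ⟨j', ?_, ?_⟩)
  · exact fun x hx => by simp only [mem_filter] at hx ⊢; exact ⟨hx.1, h.trans hx.2⟩
  · simp [hj', h]
  · simp

lemma card_filter_lt_le_add (hj' : j' ∉ S) :
    #{x ∈ S | j < x} ≤ #{x ∈ S | j' < x} + (j' - j - 1) := by
  have hsub : {x ∈ S | j < x} ⊆ {x ∈ S | j' < x} ∪ Ioo j j' := by
    intro x hx
    simp only [mem_filter, mem_union, mem_Ioo] at hx ⊢
    rcases lt_or_gt_of_ne (fun h => hj' (h ▸ hx.1) : x ≠ j') with h | h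
    · exact Or.inr ⟨hx.2, h⟩
    · exact Or.inl ⟨hx.1, h⟩
  have := (card_le_card hsub).trans (card_union_le _ _)
  rwa [Nat.card_Ioo] at this

lemma insertMinIncr_injective : Function.Injective (insertMinIncr S) := by
  intro j j' h
  by_contra hne
  wlog hlt : j < j' generalizing j j'
  · exact this h.symm (Ne.symm hne) (by omega)
  unfold insertMinIncr at h
  by_cases hj' : j' ∈ S
  · have := card_filter_lt_add_one_le hj' hlt
    split_ifs at h <;> omega
  · have := card_filter_lt_le_add (j := j) hj'
    split_ifs at h <;> omega

lemma insertMinIncr_le (hS : S ⊆ range m) (hj : j ≤ m) : insertMinIncr S j ≤ m := by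
  have hsub : {x ∈ S | j < x} ⊆ Ioo j m := fun x hx => by
    simp only [mem_filter] at hx
    exact mem_Ioo.2 ⟨hx.2, mem_range.1 (hS hx.1)⟩
  have := card_le_card hsub
  rw [Nat.card_Ioo] at this
  unfold insertMinIncr
  split_ifs <;> omega

lemma exists_insertMinIncr_eq (hS : S ⊆ range m) (hk : k ≤ m) :
    ∃ j ≤ m, insertMinIncr S j = k := by
  obtain ⟨j, hj, rfl⟩ := surjOn_of_injOn_of_card_le (s := range (m + 1)) (t := range (m + 1))
    (insertMinIncr S) (fun j hj => by
      simpa [Nat.lt_succ_iff] using insertMinIncr_le hS (Nat.lt_succ_iff.1 (mem_range.1 hj)))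
    insertMinIncr_injective.injOn le_rfl (mem_range.2 (Nat.lt_succ_of_le hk))
  exact ⟨j, Nat.lt_succ_iff.1 (mem_range.1 hj), rfl⟩

lemma insertMaxIncr_injOn : Set.InjOn (insertMaxIncr S · m) (Set.Iic m) := by
  intro j hj j' hj' h
  simp only [Set.mem_Iic] at hj hj'
  simp only [insertMaxIncr] at h
  split_ifs at h with h1 h2 h2
  · exact insertMinIncr_injective (Nat.succ_injective h)
  all_goals omega

lemma insertMax_eq_insertMin_of_gap (hS : S ⊆ range m) (h0 : 0 ∉ S) (hj : j ∈ S ∨ j = 0)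
    (hjp : j < p) (hp : p ∈ S ∨ p = m) (hgap : ∀ x, j < x → x < p → x ∉ S) :
    insertMax S p m = insertMin S j := by
  have hpm : p ∈ S ↔ p < m := ⟨fun h => mem_range.1 (hS h), fun h => hp.resolve_right h.ne⟩
  have hj0 : j ∈ S ↔ 0 < j :=
    ⟨fun h => Nat.pos_of_ne_zero fun h' => h0 (h' ▸ h), fun h => hj.resolve_right h.ne'⟩
  ext i
  simp only [mem_insertMax, mem_insertMin]
  grind

lemma insertMax_eq_insertMin_of_run (hj : j ∉ S) (hpj : p < j) (hp : p ∉ S)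
    (hrun : ∀ x, p < x → x < j → x ∈ S) (hjm : j ≤ m) :
    insertMax S p m = insertMin S j := by
  ext i
  simp only [mem_insertMax, mem_insertMin]
  grind

lemma exists_insertMax_eq_insertMin (hS : S ⊆ range m) (h0 : 0 ∉ S) (hj : j ≤ m) :
    ∃ p ≤ m, insertMax S p m = insertMin S j := by
  by_cases hjS : j ∈ S ∨ j = 0
  · rcases Nat.eq_zero_or_pos m with rfl | hm
    · obtain rfl : j = 0 := by omega
      exact ⟨0, le_rfl, by simp [insertMax, insertMin]⟩
    have hjm : j < m := hjS.elim (fun h => mem_range.1 (hS h)) (· ▸ hm)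
    have hex : ∃ x, j < x ∧ (x ∈ S ∨ x = m) := ⟨m, hjm, Or.inr rfl⟩
    exact ⟨Nat.find hex, Nat.find_min' hex ⟨hjm, Or.inr rfl⟩,
      insertMax_eq_insertMin_of_gap hS h0 hjS (Nat.find_spec hex).1 (Nat.find_spec hex).2
        fun x hjx hxp hxS => Nat.find_min hex hxp ⟨hjx, Or.inl hxS⟩⟩
  · rw [not_or] at hjS
    have hp : Nat.findGreatest (· ∉ S) (j - 1) ≤ j - 1 := Nat.findGreatest_le _
    exact ⟨Nat.findGreatest (· ∉ S) (j - 1), by omega,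
      insertMax_eq_insertMin_of_run hjS.1 (by omega)
        (Nat.findGreatest_spec (P := (· ∉ S)) (Nat.zero_le _) h0)
      (fun x hpx hxj => not_not.1 (Nat.findGreatest_is_greatest hpx (by omega))) hj⟩

end DescentSet

lemma mem_ligne {w : List ℕ} {i : ℕ} :
    i ∈ ligne w ↔ 1 ≤ i ∧ i < w.length ∧ w.getD i 0 < w.getD (i - 1) 0 := by
  simp only [ligne, Finset.mem_filter, Finset.mem_Icc]
  omega

lemma ligne_subset_range (w : List ℕ) : ligne w ⊆ Finset.range w.length :=
  fun _ hi => Finset.mem_range.2 (mem_ligne.1 hi).2.1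

lemma zero_notMem_ligne (w : List ℕ) : 0 ∉ ligne w :=
  fun h => absurd (mem_ligne.1 h).1 (by omega)

lemma ligne_map_of_strictMonoOn {w : List ℕ} {f : ℕ → ℕ} (hf : StrictMonoOn f {a | a ∈ w}) :
    ligne (w.map f) = ligne w := by
  ext i
  simp only [mem_ligne, List.length_map]
  refine and_congr_right fun hi => and_congr_right fun hiw => ?_
  have hi' : i - 1 < w.length := by omega
  rw [List.getD_eq_getElem _ _ (by simpa using hiw), List.getD_eq_getElem _ _ (by simpa using hi'),
    List.getElem_map, List.getElem_map, List.getD_eq_getElem _ _ hiw, List.getD_eq_getElem _ _ hi']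
  exact hf.lt_iff_lt (List.getElem_mem _) (List.getElem_mem _)

lemma maj_eq_of_ligne_eq {u w : List ℕ} (h : ligne u = ligne w) : maj u = maj w := by
  rw [maj, maj, h]

lemma maj_map_of_strictMonoOn {w : List ℕ} {f : ℕ → ℕ} (hf : StrictMonoOn f {a | a ∈ w}) :
    maj (w.map f) = maj w :=
  maj_eq_of_ligne_eq (ligne_map_of_strictMonoOn hf)

section insertIdx

variable {v : List ℕ} {i j x : ℕ}

lemma List.getD_insertIdx_of_lt (h : i < j) : (v.insertIdx j x).getD i 0 = v.getD i 0 := by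
  simp only [List.getD_eq_getElem?_getD, List.getElem?_insertIdx_of_lt h]

lemma List.getD_insertIdx_self (hj : j ≤ v.length) : (v.insertIdx j x).getD j 0 = x := by
  simp only [List.getD_eq_getElem?_getD, List.getElem?_insertIdx_self, if_pos hj, Option.getD_some]

lemma List.getD_insertIdx_of_gt (h : j < i) : (v.insertIdx j x).getD i 0 = v.getD (i - 1) 0 := by
  simp only [List.getD_eq_getElem?_getD, List.getElem?_insertIdx_of_gt h]

lemma mem_ligne_insertIdx (hj : j ≤ v.length) :
    i ∈ ligne (v.insertIdx j x) ↔ i < j ∧ i ∈ ligne v ∨ 0 < i ∧ i = j ∧ x < v.getD (j - 1) 0 ∨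
      i = j + 1 ∧ j < v.length ∧ v.getD j 0 < x ∨ j + 1 < i ∧ i - 1 ∈ ligne v := by
  rw [mem_ligne, mem_ligne, mem_ligne, List.length_insertIdx_of_le_length hj]
  rcases lt_trichotomy i j with h | rfl | h
  · rw [List.getD_insertIdx_of_lt h, List.getD_insertIdx_of_lt (by omega)]
    omega
  · rcases Nat.eq_zero_or_pos i with rfl | hi
    · omega
    rw [List.getD_insertIdx_self hj, List.getD_insertIdx_of_lt (by omega)]
    omega
  · rw [List.getD_insertIdx_of_gt h]
    rcases Nat.lt_or_ge (j + 1) i with h' | h'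
    · rw [List.getD_insertIdx_of_gt (by omega : j < i - 1), Nat.sub_sub]
      omega
    · obtain rfl : i = j + 1 := by omega
      rw [Nat.add_sub_cancel, List.getD_insertIdx_self hj]
      omega

lemma List.getD_mem_of_lt {i : ℕ} (h : i < v.length) : v.getD i 0 ∈ v := by
  rw [List.getD_eq_getElem _ _ h]
  exact List.getElem_mem h

lemma ligne_insertIdx_of_forall_lt (hj : j ≤ v.length) (hx : ∀ a ∈ v, x < a) :
    ligne (v.insertIdx j x) = DescentSet.insertMin (ligne v) j := by
  have hprev : 0 < j → x < v.getD (j - 1) 0 := fun h => hx _ (List.getD_mem_of_lt (by omega))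
  have hnext : j < v.length → x < v.getD j 0 := fun h => hx _ (List.getD_mem_of_lt h)
  ext i
  rw [mem_ligne_insertIdx hj, DescentSet.mem_insertMin]
  grind

lemma ligne_insertIdx_of_forall_gt (hj : j ≤ v.length) (hx : ∀ a ∈ v, a < x) :
    ligne (v.insertIdx j x) = DescentSet.insertMax (ligne v) j v.length := by
  have hprev : 0 < j → v.getD (j - 1) 0 < x := fun h => hx _ (List.getD_mem_of_lt (by omega))
  have hnext : j < v.length → v.getD j 0 < x := fun h => hx _ (List.getD_mem_of_lt h)
  ext i
  rw [mem_ligne_insertIdx hj, DescentSet.mem_insertMax]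
  grind

lemma maj_insertIdx_of_forall_lt (hj : j ≤ v.length) (hx : ∀ a ∈ v, x < a) :
    maj (v.insertIdx j x) = maj v + DescentSet.insertMinIncr (ligne v) j := by
  rw [maj, maj, ligne_insertIdx_of_forall_lt hj hx, DescentSet.sum_insertMin]

lemma maj_insertIdx_of_forall_gt (hj : j ≤ v.length) (hx : ∀ a ∈ v, a < x) :
    maj (v.insertIdx j x) = maj v + DescentSet.insertMaxIncr (ligne v) j v.length := by
  rw [maj, maj, ligne_insertIdx_of_forall_gt hj hx, DescentSet.sum_insertMax (ligne_subset_range v)]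

lemma List.filter_insertIdx_of_not {p : ℕ → Bool} (hx : p x = false) :
    (v.insertIdx j x).filter p = v.filter p := by
  induction v generalizing j with
  | nil => cases j <;> simp [List.insertIdx_zero, List.insertIdx_succ_nil, hx]
  | cons a v ih =>
    cases j <;> simp [List.insertIdx_zero, List.insertIdx_succ_cons, List.filter_cons, hx, ih]

lemma List.eq_insertIdx_filter_of_nodup {w : List ℕ} {p : ℕ → Bool} (hw : w.Nodup) (hxw : x ∈ w)
    (hp : ∀ a ∈ w, p a = true ↔ a ≠ x) : w = (w.filter p).insertIdx (w.idxOf x) x := by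
  have hfilter : w.filter p = w.erase x := by
    rw [hw.erase_eq_filter]
    exact List.filter_congr fun a ha => by rw [Bool.eq_iff_iff, hp a ha, bne_iff_ne]
  have := List.insertIdx_eraseIdx_getElem (List.idxOf_lt_length_of_mem hxw)
  rw [List.getElem_idxOf] at this
  rw [hfilter, List.erase_eq_eraseIdx_of_idxOf rfl, this]

end insertIdx

lemma isPermWord_iff {n : ℕ} {w : List ℕ} :
    IsPermWord n w ↔ w.Nodup ∧ ∀ a, a ∈ w ↔ 1 ≤ a ∧ a ≤ n := by
  have hrange : ∀ a, a ∈ List.range' 1 n ↔ 1 ≤ a ∧ a ≤ n := fun a => by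
    rw [List.mem_range'_1]; omega
  constructor
  · intro hw
    exact ⟨hw.nodup_iff.2 List.nodup_range', fun a => by rw [hw.mem_iff, hrange]⟩
  · rintro ⟨hnd, hmem⟩
    exact (List.perm_ext_iff_of_nodup hnd List.nodup_range').2 fun a => by rw [hmem, hrange]

namespace IsPermWord

variable {n j : ℕ} {w : List ℕ}

lemma length_eq (hw : IsPermWord n w) : w.length = n := by
  rw [List.Perm.length_eq hw, List.length_range']

lemma nodup (hw : IsPermWord n w) : w.Nodup := (isPermWord_iff.1 hw).1

lemma mem_iff (hw : IsPermWord n w) {a : ℕ} : a ∈ w ↔ 1 ≤ a ∧ a ≤ n := (isPermWord_iff.1 hw).2 a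

lemma filter_le (hw : IsPermWord (n + 1) w) : IsPermWord n (w.filter (· ≤ n)) := by
  refine isPermWord_iff.2 ⟨hw.nodup.filter _, fun a => ?_⟩
  simp only [List.mem_filter, hw.mem_iff, decide_eq_true_eq]
  omega

lemma map_pred_filter (hw : IsPermWord (n + 1) w) :
    IsPermWord n ((w.filter (2 ≤ ·)).map (· - 1)) := by
  refine isPermWord_iff.2 ⟨(hw.nodup.filter _).map_on fun a ha b hb hab => ?_, fun a => ?_⟩
  · simp only [List.mem_filter, decide_eq_true_eq] at ha hb
    omega
  · simp only [List.mem_map, List.mem_filter, hw.mem_iff, decide_eq_true_eq]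
    constructor
    · rintro ⟨b, hb, rfl⟩
      omega
    · intro ha
      exact ⟨a + 1, by omega, by omega⟩

lemma insertIdx_max (hw : IsPermWord n w) (hj : j ≤ n) :
    IsPermWord (n + 1) (w.insertIdx j (n + 1)) := by
  have hperm := List.perm_insertIdx (n + 1) w (i := j) (hw.length_eq ▸ hj)
  refine isPermWord_iff.2 ⟨hperm.nodup_iff.2 (List.nodup_cons.2 ⟨?_, hw.nodup⟩), fun a => ?_⟩
  · rw [hw.mem_iff]; omega
  · rw [hperm.mem_iff, List.mem_cons, hw.mem_iff]; omega

lemma insertIdx_one_map_succ (hw : IsPermWord n w) (hj : j ≤ n) :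
    IsPermWord (n + 1) ((w.map (· + 1)).insertIdx j 1) := by
  have hperm := List.perm_insertIdx 1 (w.map (· + 1)) (i := j)
    (by rwa [List.length_map, hw.length_eq])
  refine isPermWord_iff.2 ⟨hperm.nodup_iff.2 (List.nodup_cons.2 ⟨?_, ?_⟩), fun a => ?_⟩
  · rw [List.mem_map]
    rintro ⟨b, hb, hb1⟩
    have := hw.mem_iff.1 hb
    omega
  · exact hw.nodup.map (add_left_injective 1)
  · rw [hperm.mem_iff, List.mem_cons, List.mem_map]
    constructor
    · rintro (rfl | ⟨b, hb, rfl⟩)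
      · omega
      · have := hw.mem_iff.1 hb; omega
    · intro ha
      rcases ha.1.eq_or_lt with rfl | ha1
      · exact Or.inl rfl
      · exact Or.inr ⟨a - 1, hw.mem_iff.2 (by omega), by omega⟩

lemma exists_eq_insertIdx_one (hw : IsPermWord (n + 1) w) :
    ∃ j ≤ n, w = (w.filter (2 ≤ ·)).insertIdx j 1 := by
  have h1 : 1 ∈ w := hw.mem_iff.2 (by omega)
  refine ⟨w.idxOf 1, ?_, List.eq_insertIdx_filter_of_nodup hw.nodup h1 fun a ha => ?_⟩
  · have := List.idxOf_lt_length_of_mem h1; rw [hw.length_eq] at this; omega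
  · have := hw.mem_iff.1 ha; simp only [decide_eq_true_eq]; omega

lemma exists_eq_insertIdx_max (hw : IsPermWord (n + 1) w) :
    ∃ j ≤ n, w = (w.filter (· ≤ n)).insertIdx j (n + 1) := by
  have h1 : n + 1 ∈ w := hw.mem_iff.2 (by omega)
  refine ⟨w.idxOf (n + 1), ?_, List.eq_insertIdx_filter_of_nodup hw.nodup h1 fun a ha => ?_⟩
  · have := List.idxOf_lt_length_of_mem h1; rw [hw.length_eq] at this; omega
  · have := hw.mem_iff.1 ha; simp only [decide_eq_true_eq]; omega

lemma exists_ligne_eq_insertMin (hw : IsPermWord (n + 1) w) :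
    ∃ j ≤ n, ligne w = DescentSet.insertMin (ligne (w.filter (2 ≤ ·))) j := by
  obtain ⟨j, hj, hw_eq⟩ := hw.exists_eq_insertIdx_one
  have hlen : (w.filter (2 ≤ ·)).length = n := by
    rw [← hw.map_pred_filter.length_eq, List.length_map]
  have hgt : ∀ a ∈ w.filter (2 ≤ ·), 1 < a := fun a ha => by
    have := (List.mem_filter.1 ha).2
    simp only [decide_eq_true_eq] at this
    omega
  exact ⟨j, hj, by conv_lhs => rw [hw_eq, ligne_insertIdx_of_forall_lt (hj.trans hlen.ge) hgt]⟩

lemma exists_ligne_eq_insertMax (hw : IsPermWord (n + 1) w) :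
    ∃ j ≤ n, ligne w = DescentSet.insertMax (ligne (w.filter (· ≤ n))) j n ∧
      maj w = maj (w.filter (· ≤ n)) + DescentSet.insertMaxIncr (ligne (w.filter (· ≤ n))) j n := by
  obtain ⟨j, hj, hw_eq⟩ := hw.exists_eq_insertIdx_max
  have hlen := hw.filter_le.length_eq
  have hlt : ∀ a ∈ w.filter (· ≤ n), a < n + 1 := fun a ha => by
    have := (List.mem_filter.1 ha).2
    simp only [decide_eq_true_eq] at this
    omega
  refine ⟨j, hj, ?_, ?_⟩
  · conv_lhs => rw [hw_eq, ligne_insertIdx_of_forall_gt (hj.trans hlen.ge) hlt, hlen]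
  · conv_lhs => rw [hw_eq, maj_insertIdx_of_forall_gt (hj.trans hlen.ge) hlt, hlen]

end IsPermWord

section codes

variable {n : ℕ}

lemma ligne_map_pred_filter (w : List ℕ) :
    ligne ((w.filter (2 ≤ ·)).map (· - 1)) = ligne (w.filter (2 ≤ ·)) := by
  refine ligne_map_of_strictMonoOn fun a ha b hb hab => ?_
  simp only [Set.mem_ofPred_eq, List.mem_filter, decide_eq_true_eq] at ha hb
  omega

lemma maj_filter_map_pred_filter {w : List ℕ} (hw : ∀ a ∈ w, 1 ≤ a) {k : ℕ} (hk : 1 ≤ k) :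
    maj (((w.filter (2 ≤ ·)).map (· - 1)).filter (k ≤ ·)) = maj (w.filter (k + 1 ≤ ·)) := by
  have hfilter : ((w.filter (2 ≤ ·)).map (· - 1)).filter (k ≤ ·) =
      (w.filter (k + 1 ≤ ·)).map (· - 1) := by
    rw [List.filter_map, List.filter_filter]
    congr 1
    refine List.filter_congr fun a ha => ?_
    have := hw a ha
    rw [Bool.eq_iff_iff]
    simp only [Function.comp_apply, Bool.and_eq_true, decide_eq_true_eq]
    omega
  rw [hfilter]
  refine maj_map_of_strictMonoOn fun a ha b hb hab => ?_
  simp only [Set.mem_ofPred_eq, List.mem_filter, decide_eq_true_eq] at ha hb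
  omega

lemma mc_eq_cons {w : List ℕ} (hw : IsPermWord (n + 1) w) :
    mc w = (maj w - maj (w.filter (2 ≤ ·))) :: mc ((w.filter (2 ≤ ·)).map (· - 1)) := by
  have hw1 : ∀ a ∈ w, 1 ≤ a := fun a ha => (hw.mem_iff.1 ha).1
  unfold mc
  rw [hw.length_eq, hw.map_pred_filter.length_eq, List.range_succ_eq_map, List.map_cons,
    List.map_map]
  congr 1
  · rw [List.filter_eq_self.2 fun a ha => by simpa using hw1 a ha]
  · refine List.map_congr_left fun i _ => ?_
    simp only [Function.comp_apply]
    rw [maj_filter_map_pred_filter hw1 (by omega : 1 ≤ i + 1),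
      maj_filter_map_pred_filter hw1 (by omega : 1 ≤ i + 2)]

lemma filter_le_filter_le {u : List ℕ} {k : ℕ} (hk : k ≤ n) :
    (u.filter (· ≤ n)).filter (· ≤ k) = u.filter (· ≤ k) := by
  rw [List.filter_filter]
  refine List.filter_congr fun a _ => ?_
  rw [Bool.eq_iff_iff]
  simp only [Bool.and_eq_true, decide_eq_true_eq]
  omega

lemma majcode_eq_concat {u : List ℕ} (hu : IsPermWord (n + 1) u) :
    majcode u = majcode (u.filter (· ≤ n)) ++ [maj u - maj (u.filter (· ≤ n))] := by
  unfold majcode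
  rw [hu.length_eq, hu.filter_le.length_eq, List.range_succ, List.map_append, List.map_singleton]
  congr 1
  · refine List.map_congr_left fun i hi => ?_
    rw [List.mem_range] at hi
    rw [filter_le_filter_le (by omega), filter_le_filter_le (by omega)]
  · rw [List.filter_eq_self.2 fun a ha => by simpa using (hu.mem_iff.1 ha).2]

end codes

lemma Subdiagonal.of_cons {k : ℕ} {t : List ℕ} (hd : Subdiagonal (k :: t)) :
    k ≤ t.length ∧ Subdiagonal t := by
  refine ⟨by simpa using hd 0 (by simp), fun i hi => ?_⟩
  have := hd (i + 1) (by simpa using hi)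
  simp only [List.getD_cons_succ, List.length_cons] at this
  omega

theorem exists_isPermWord_mc_eq :
    ∀ d : List ℕ, Subdiagonal d → ∃ w, IsPermWord d.length w ∧ mc w = d
  | [], _ => ⟨[], List.Perm.refl _, rfl⟩
  | k :: t, hd => by
    obtain ⟨hk, ht⟩ := hd.of_cons
    obtain ⟨w, hw, rfl⟩ := exists_isPermWord_mc_eq t ht
    set n := (mc w).length
    set v := w.map (· + 1) with hvw
    have hv : ∀ a ∈ v, 2 ≤ a := by
      simp only [hvw, List.mem_map]
      rintro _ ⟨b, hb, rfl⟩
      have := (hw.mem_iff.1 hb).1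
      omega
    have hvlen : v.length = n := by rw [List.length_map, hw.length_eq]
    have hvw' : v.map (· - 1) = w := by
      rw [hvw, List.map_map]; exact List.map_id'' (fun a => Nat.add_sub_cancel a 1) w
    obtain ⟨j, hj, hjk⟩ := DescentSet.exists_insertMinIncr_eq (hvlen ▸ ligne_subset_range v) hk
    have hw' := hw.insertIdx_one_map_succ hj
    refine ⟨_, hw', ?_⟩
    have hfilter : (v.insertIdx j 1).filter (2 ≤ ·) = v := by
      rw [List.filter_insertIdx_of_not (by simp),
        List.filter_eq_self.2 fun a ha => decide_eq_true (hv a ha)]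
    rw [mc_eq_cons hw', hfilter, hvw',
      maj_insertIdx_of_forall_lt (hj.trans hvlen.ge) (fun a ha => by have := hv a ha; omega), hjk,
      Nat.add_sub_cancel_left]

theorem ligne_eq_of_majcode_eq : ∀ {n : ℕ} {u u' : List ℕ}, IsPermWord n u → IsPermWord n u' →
    majcode u = majcode u' → ligne u = ligne u'
  | 0, _, _, hu, hu', _ => by rw [List.Perm.eq_nil hu, List.Perm.eq_nil hu']
  | n + 1, u, u', hu, hu', h => by
    rw [majcode_eq_concat hu, majcode_eq_concat hu'] at h
    obtain ⟨hcode, hlast⟩ := List.append_inj h (by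
      simp only [majcode, List.length_map, List.length_range, hu.filter_le.length_eq,
        hu'.filter_le.length_eq])
    have hS := ligne_eq_of_majcode_eq hu.filter_le hu'.filter_le hcode
    obtain ⟨j, hj, hlig, hmaj⟩ := hu.exists_ligne_eq_insertMax
    obtain ⟨j', hj', hlig', hmaj'⟩ := hu'.exists_ligne_eq_insertMax
    rw [List.singleton_inj, hmaj, hmaj', maj_eq_of_ligne_eq hS, hS] at hlast
    have hjj' : j = j' := DescentSet.insertMaxIncr_injOn hj hj' (by simpa using hlast)
    rw [hlig, hlig', hS, hjj']

theorem exists_majcode_eq_reverse_mc : ∀ {n : ℕ} {w : List ℕ}, IsPermWord n w →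
    ∃ u, IsPermWord n u ∧ majcode u = (mc w).reverse ∧ ligne u = ligne w
  | 0, w, hw => by
    rw [List.Perm.eq_nil hw]
    exact ⟨[], List.Perm.refl _, rfl, rfl⟩
  | n + 1, w, hw => by
    obtain ⟨j, hj, hligw⟩ := hw.exists_ligne_eq_insertMin
    obtain ⟨u, hu, hmaj, hlig⟩ := exists_majcode_eq_reverse_mc hw.map_pred_filter
    rw [ligne_map_pred_filter] at hlig
    have hulen := hu.length_eq
    obtain ⟨p, hp, hpj⟩ := DescentSet.exists_insertMax_eq_insertMin
      (hulen ▸ ligne_subset_range u) (zero_notMem_ligne u) hj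
    have hu' := hu.insertIdx_max hp
    have hlt : ∀ a ∈ u, a < n + 1 := fun a ha => by have := hu.mem_iff.1 ha; omega
    have hlig' : ligne (u.insertIdx p (n + 1)) = ligne w := by
      rw [ligne_insertIdx_of_forall_gt (hp.trans hulen.ge) hlt, hulen, hpj, hligw, hlig]
    refine ⟨_, hu', ?_, hlig'⟩
    have hfilter : (u.insertIdx p (n + 1)).filter (· ≤ n) = u := by
      rw [List.filter_insertIdx_of_not (by simp),
        List.filter_eq_self.2 fun a ha => decide_eq_true (Nat.lt_succ_iff.1 (hlt a ha))]
    rw [majcode_eq_concat hu', hfilter, hmaj, mc_eq_cons hw, List.reverse_cons,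
      maj_eq_of_ligne_eq hlig', maj_eq_of_ligne_eq hlig]

theorem stmt17 (d : List ℕ) (hd : Subdiagonal d) :
    El d = Eul d.reverse := by
  have hEl : ∃ w, IsPermWord d.length w ∧ mc w = d := exists_isPermWord_mc_eq d hd
  obtain ⟨hw, hwd⟩ := hEl.choose_spec
  obtain ⟨u, hu, hud, hlig⟩ := exists_majcode_eq_reverse_mc hw
  rw [hwd] at hud
  rw [← List.length_reverse] at hu
  have hEul : ∃ u, IsPermWord d.reverse.length u ∧ majcode u = d.reverse := ⟨u, hu, hud⟩
  obtain ⟨hu', hu'd⟩ := hEul.choose_spec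
  rw [El, Eul, dif_pos hEl, dif_pos hEul, ← hlig]
  exact ligne_eq_of_majcode_eq hu hu' (hud.trans hu'd.symm)
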